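/- Let H₊, H₋ be complex Hilbert spaces and H = H₊ × H₋. Let S₊, S₋ be self-adjoint operators in H₊, H₋, let M be a densely defined operator from H₋ to H₊ with adjoint M*, with dom S₋ ⊆ dom M, dom S₊ ⊆ dom M*, and suppose there are constants a₋, a₊ ≥ 0 and 0 ≤ b₋, b₊ < 1 such that ‖M f₋‖² ≤ a₋‖f₋‖² + b₋‖S₋ f₋‖² for all f₋ ∈ dom S₋ and ‖M* f₊‖² ≤ a₊‖f₊‖² + b₊‖S₊ f₊‖² for all f₊ ∈ dom S₊. Define S on dom S = dom S₊ × dom S₋ by S(f₊, f₋) = (S₊ f₊ + M f₋, −M* f₊ + S₋ f₋). Let λ ∈ ℝ be such that |λ − t| > √(a₋ + b₋ t²) for every t ∈ σ(S₋). Then for every sequence (fₙ) = ((fₙ⁺, fₙ⁻)) in dom S with ‖fₙ‖ = 1 for all n and ‖(S − λ)fₙ‖ → 0 as n → ∞, one has liminf_{n→∞} (‖fₙ⁺‖² − ‖fₙ⁻‖²) > 0. -/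

import Mathlib

/-!
Since `b₋ < 1` and `σ(S₋)` is closed, the strict gap `a₋ + b₋ |t|² < |λ - t|²` on `σ(S₋)` widens
to `(a₋ + ε) + (b₋ + ε) |t|² ≤ |λ - t|²`, and for self-adjoint `S₋` this spectral inequality
becomes `(a₋ + ε) ‖g‖² + (b₋ + ε) ‖S₋ g‖² ≤ ‖(S₋ - λ) g‖²`. Hence `M (S₋ - λ)⁻¹` is bounded with
norm `κ < 1`, and so is its adjoint, which extends `(S₋ - λ)⁻¹ M*`. The second row of
`(S - λ) fₙ → 0` reads `fₙ⁻ = (S₋ - λ)⁻¹ M* fₙ⁺ + o(1)`, so `‖fₙ⁻‖ ≤ κ ‖fₙ⁺‖ + o(1)`; together with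
`‖fₙ⁺‖² + ‖fₙ⁻‖² = 1` this keeps `‖fₙ⁺‖² - ‖fₙ⁻‖²` eventually above `(1 - κ) / 4`.
-/

noncomputable section

open Filter Topology

/-- `R` is the (bounded, everywhere defined) resolvent of the possibly unbounded
operator `S` at the point `lam`: the range of `R` lies in the domain of `S`,
`(S - lam) ∘ R = id` on the whole space and `R ∘ (S - lam) = id` on the domain of `S`. -/
def ResolventAt {H : Type*} [NormedAddCommGroup H] [InnerProductSpace ℂ H]
    (S : H →ₗ.[ℂ] H) (lam : ℂ) (R : H →L[ℂ] H) : Prop :=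
  (∀ f : H, ∃ h : R f ∈ S.domain, S ⟨R f, h⟩ - lam • R f = f) ∧
  ∀ g : S.domain, R (S g - lam • (g : H)) = g

/-- `lam` belongs to the resolvent set of `S`. -/
def InResolventSet {H : Type*} [NormedAddCommGroup H] [InnerProductSpace ℂ H]
    (S : H →ₗ.[ℂ] H) (lam : ℂ) : Prop :=
  ∃ R : H →L[ℂ] H, ResolventAt S lam R

/-- The spectrum of a possibly unbounded operator. -/
def Spec {H : Type*} [NormedAddCommGroup H] [InnerProductSpace ℂ H]
    (S : H →ₗ.[ℂ] H) : Set ℂ :=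
  {lam | ¬ InResolventSet S lam}

open scoped InnerProductSpace

lemma mul_norm_sub_ofReal_smul_sq {E : Type*} [NormedAddCommGroup E] [InnerProductSpace ℂ E]
    (u v : E) {c mu lam : ℝ} (h : c * mu = lam) :
    c * ‖u - (mu : ℂ) • v‖ ^ 2
      = ‖u - (lam : ℂ) • v‖ ^ 2 - (1 - c) * ‖u‖ ^ 2 + (c * mu ^ 2 - lam ^ 2) * ‖v‖ ^ 2 := by
  subst h
  simp only [@norm_sub_sq ℂ, inner_smul_right, RCLike.re_to_complex, Complex.ofReal_mul,
    mul_assoc, Complex.re_ofReal_mul, norm_smul, norm_mul, Complex.norm_real, Real.norm_eq_abs,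
    mul_pow, sq_abs]
  ring

section Resolvent

variable {H : Type*} [NormedAddCommGroup H] [InnerProductSpace ℂ H]

lemma IsSelfAdjoint.isFormalAdjoint_self [CompleteSpace H] {S : H →ₗ.[ℂ] H}
    (hS : IsSelfAdjoint S) : S.IsFormalAdjoint S := by
  have h := LinearPMap.adjoint_isFormalAdjoint hS.dense_domain
  rwa [LinearPMap.isSelfAdjoint_def.mp hS] at h

namespace ResolventAt

variable {S : H →ₗ.[ℂ] H}

lemma sub_apply_eq_smul {mu nu : ℂ} {R R' : H →L[ℂ] H}
    (hR : ResolventAt S mu R) (hR' : ResolventAt S nu R') (f : H) :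
    R f - R' f = (mu - nu) • R (R' f) := by
  obtain ⟨hmem, heq⟩ := hR'.1 f
  have h : R (S ⟨R' f, hmem⟩ - mu • R' f) = R' f := hR.2 ⟨R' f, hmem⟩
  rw [eq_add_of_sub_eq heq, add_sub_assoc, ← sub_smul, map_add, map_smul] at h
  linear_combination (norm := module) h

lemma add_inv_mem_spec {mu z : ℂ} {R : H →L[ℂ] H} (hR : ResolventAt S mu R)
    (hz : z ∈ spectrum ℂ R) (hz0 : z ≠ 0) : mu + z⁻¹ ∈ Spec S := by
  rintro ⟨R', hR'⟩
  refine spectrum.mem_iff.mp hz (isUnit_iff_exists.mpr ⟨z⁻¹ • 1 + (z⁻¹ * z⁻¹) • R', ?_, ?_⟩)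
  all_goals
    ext f
    simp only [mul_apply_eq_comp, sub_apply, add_apply, smul_apply, one_apply_eq_self,
      Algebra.algebraMap_eq_smul_one, map_add, map_sub, map_smul]
  · linear_combination (norm := skip) (-z⁻¹) • hR.sub_apply_eq_smul hR' f
    match_scalars <;> field_simp <;> ring
  · linear_combination (norm := skip) z⁻¹ • hR'.sub_apply_eq_smul hR f
    match_scalars <;> field_simp <;> ring

lemma isSelfAdjoint [CompleteSpace H] (hS : S.IsFormalAdjoint S) {mu : ℝ} {R : H →L[ℂ] H}
    (hR : ResolventAt S mu R) : IsSelfAdjoint R := by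
  rw [ContinuousLinearMap.isSelfAdjoint_iff_isSymmetric]
  intro f h
  obtain ⟨hf, hfe⟩ := hR.1 f
  obtain ⟨hh, hhe⟩ := hR.1 h
  calc ⟪R f, h⟫_ℂ = ⟪R f, S ⟨R h, hh⟩ - (mu : ℂ) • R h⟫_ℂ := by rw [hhe]
    _ = ⟪S ⟨R f, hf⟩ - (mu : ℂ) • R f, R h⟫_ℂ := by
      rw [inner_sub_right, inner_sub_left, inner_smul_right, inner_smul_left,
        hS ⟨R f, hf⟩ ⟨R h, hh⟩, Complex.conj_ofReal]
    _ = ⟪f, R h⟫_ℂ := by rw [hfe]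

end ResolventAt

variable [CompleteSpace H] {S : H →ₗ.[ℂ] H}

/-- Neumann series: `R0 (1 - (lam - lam0) R0)⁻¹` is the resolvent at `lam`. -/
lemma ResolventAt.inResolventSet_of_norm_sub_mul_lt {lam0 lam : ℂ} {R0 : H →L[ℂ] H}
    (h : ResolventAt S lam0 R0) (hlt : ‖lam - lam0‖ * ‖R0‖ < 1) :
    InResolventSet S lam := by
  obtain ⟨c, rfl⟩ : ∃ c, lam = lam0 + c := ⟨lam - lam0, by ring⟩
  rw [add_sub_cancel_left] at hlt
  let u := Units.oneSub (c • R0) (lt_of_le_of_lt (norm_smul_le _ _) hlt)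
  set v : H →L[ℂ] H := ↑u⁻¹
  have hu : (u : H →L[ℂ] H) = 1 - c • R0 := Units.val_oneSub _ _
  have huv (f : H) : v f - c • R0 (v f) = f := by
    simpa [hu] using congr($(u.mul_inv) f)
  have hvu (f : H) : v (f - c • R0 f) = f := by
    simpa [hu] using congr($(u.inv_mul) f)
  have hcomm : R0 * v = v * R0 := by
    refine (Commute.units_inv_right ?_).eq
    rw [hu]
    exact (Commute.one_right R0).sub_right ((Commute.refl R0).smul_right c)
  refine ⟨R0 * v, fun f => ?_, fun g => ?_⟩
  · obtain ⟨hmem, heq⟩ := h.1 (v f)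
    refine ⟨hmem, ?_⟩
    calc _ = (S ⟨_, hmem⟩ - lam0 • R0 (v f)) - c • R0 (v f) := by
          simp only [mul_apply_eq_comp]; module
      _ = f := by rw [heq, huv]
  · have hg : R0 (S g - lam0 • (g : H)) = g := h.2 g
    calc (R0 * v) (S g - (lam0 + c) • (g : H))
        = v (R0 (S g - lam0 • (g : H)) - c • R0 g) := by
          rw [hcomm, mul_apply_eq_comp, ← map_smul, ← map_sub, add_smul, sub_add_eq_sub_sub]
      _ = g := by rw [hg, hvu]

lemma isClosed_spec (S : H →ₗ.[ℂ] H) : IsClosed (Spec S) := by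
  refine isOpen_compl_iff.mp (Metric.isOpen_iff.mpr fun lam0 hlam0 => ?_)
  obtain ⟨R0, hR0⟩ := not_not.mp hlam0
  refine ⟨(1 + ‖R0‖)⁻¹, by positivity, fun lam hlam => not_not.mpr ?_⟩
  refine hR0.inResolventSet_of_norm_sub_mul_lt ?_
  rw [Metric.mem_ball, dist_eq_norm, ← one_div, lt_div_iff₀ (by positivity)] at hlam
  nlinarith [norm_nonneg (lam - lam0)]

lemma ResolventAt.norm_le_inv (hS : S.IsFormalAdjoint S) {mu r : ℝ} (hr : 0 < r)
    (hsep : ∀ z ∈ Spec S, r ≤ ‖(mu : ℂ) - z‖) {R : H →L[ℂ] H} (hR : ResolventAt S mu R) :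
    ‖R‖ ≤ r⁻¹ := by
  -- For self-adjoint `R`, `‖R‖` is the spectral radius.
  have hspec : ∀ z ∈ spectrum ℂ R, ‖z‖ ≤ r⁻¹ := by
    intro z hz
    rcases eq_or_ne z 0 with rfl | hz0
    · simpa using hr.le
    · have h := hsep _ (hR.add_inv_mem_spec hz hz0)
      rwa [sub_add_cancel_left, norm_neg, norm_inv, le_inv_comm₀ hr (norm_pos_iff.mpr hz0)] at h
  have hrad : spectralRadius ℂ R ≤ ENNReal.ofReal r⁻¹ :=
    iSup₂_le fun z hz => by
      rw [← enorm_eq_nnnorm, ← ofReal_norm]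
      exact ENNReal.ofReal_le_ofReal (hspec z hz)
  rwa [(hR.isSelfAdjoint hS).spectralRadius_eq_nnnorm, ← enorm_eq_nnnorm, ← ofReal_norm,
    ENNReal.ofReal_le_ofReal_iff (by positivity)] at hrad

lemma mul_norm_le_norm_sub_smul_of_le_dist (hS : S.IsFormalAdjoint S) {mu r : ℝ} (hr : 0 < r)
    (hsep : ∀ z ∈ Spec S, r ≤ ‖(mu : ℂ) - z‖) (g : S.domain) :
    r * ‖(g : H)‖ ≤ ‖S g - (mu : ℂ) • (g : H)‖ := by
  obtain ⟨R, hR⟩ : InResolventSet S mu := by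
    by_contra hmu
    simpa using hr.trans_le (hsep _ hmu)
  calc r * ‖(g : H)‖ = r * ‖R (S g - (mu : ℂ) • (g : H))‖ := by rw [hR.2 g]
    _ ≤ r * (r⁻¹ * ‖S g - (mu : ℂ) • (g : H)‖) := by
      gcongr
      exact R.le_of_opNorm_le (hR.norm_le_inv hS hr hsep) _
    _ = ‖S g - (mu : ℂ) • (g : H)‖ := by field_simp

lemma mul_norm_sq_le_norm_sub_smul_sq_of_le_dist_sq (hS : S.IsFormalAdjoint S) {mu r : ℝ}
    (hsep : ∀ z ∈ Spec S, r ≤ ‖(mu : ℂ) - z‖ ^ 2) (g : S.domain) :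
    r * ‖(g : H)‖ ^ 2 ≤ ‖S g - (mu : ℂ) • (g : H)‖ ^ 2 := by
  rcases le_or_gt r 0 with hr | hr
  · exact (mul_nonpos_of_nonpos_of_nonneg hr (by positivity)).trans (by positivity)
  have h := mul_norm_le_norm_sub_smul_of_le_dist hS (Real.sqrt_pos.mpr hr)
    (fun z hz => Real.sqrt_le_sqrt (hsep z hz) |>.trans_eq (Real.sqrt_sq (norm_nonneg _))) g
  calc r * ‖(g : H)‖ ^ 2 = (√r * ‖(g : H)‖) ^ 2 := by rw [mul_pow, Real.sq_sqrt hr.le]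
    _ ≤ _ := by gcongr

/-- Completing the square turns both inequalities into lower bounds for the distance from
`lam / (1 - b)` to the spectrum. -/
lemma add_mul_norm_sq_le_norm_sub_smul_sq_of_spec (hS : S.IsFormalAdjoint S) {a b lam : ℝ}
    (hb : b < 1) (hspec : ∀ z ∈ Spec S, a + b * ‖z‖ ^ 2 ≤ ‖(lam : ℂ) - z‖ ^ 2) (g : S.domain) :
    a * ‖(g : H)‖ ^ 2 + b * ‖S g‖ ^ 2 ≤ ‖S g - (lam : ℂ) • (g : H)‖ ^ 2 := by
  set c := 1 - b
  have hc : 0 < c := sub_pos.mpr hb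
  have hcmu : c * (lam / c) = lam := mul_div_cancel₀ lam hc.ne'
  set d := c * (lam / c) ^ 2 - lam ^ 2 + a
  have hdist : ∀ z ∈ Spec S, d / c ≤ ‖((lam / c : ℝ) : ℂ) - z‖ ^ 2 := by
    intro z hz
    have h := mul_norm_sub_ofReal_smul_sq z 1 hcmu
    simp only [norm_one, smul_eq_mul, mul_one, one_pow] at h
    rw [norm_sub_rev, norm_sub_rev z] at h
    rw [div_le_iff₀' hc]
    linarith [hspec z hz]
  have hg := mul_norm_sq_le_norm_sub_smul_sq_of_le_dist_sq hS hdist g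
  have h := mul_norm_sub_ofReal_smul_sq (S g) (g : H) hcmu
  rw [div_mul_eq_mul_div, div_le_iff₀' hc] at hg
  linarith

end Resolvent

lemma exists_forall_le_norm_add_mul_sq_le {E : Type*} [SeminormedAddCommGroup E] (w : E) (a : ℝ)
    {β : ℝ} (hβ : β < 1) : ∃ T, ∀ z : E, T ≤ ‖z‖ → a + β * ‖z‖ ^ 2 ≤ ‖w - z‖ ^ 2 := by
  have hd : 0 < 1 - β := sub_pos.mpr hβ
  refine ⟨1 + ‖w‖ + (2 * ‖w‖ + |a|) / (1 - β), fun z hz => ?_⟩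
  have hdz : 2 * ‖w‖ + |a| ≤ (1 - β) * ‖z‖ := by
    have : (1 - β) * (1 + ‖w‖) + (2 * ‖w‖ + |a|) ≤ (1 - β) * ‖z‖ := by
      rw [← mul_div_cancel₀ (2 * ‖w‖ + |a|) hd.ne', ← mul_add]; gcongr
    nlinarith [norm_nonneg w]
  have hX : 0 ≤ (2 * ‖w‖ + |a|) / (1 - β) := by positivity
  have hz1 : 1 ≤ ‖z‖ := by linarith [norm_nonneg w]
  have hwz : ‖z‖ - ‖w‖ ≤ ‖w - z‖ := by rw [norm_sub_rev]; exact norm_sub_norm_le z w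
  have hwz' : 0 ≤ ‖z‖ - ‖w‖ := by linarith
  nlinarith [pow_le_pow_left₀ hwz' hwz 2, le_abs_self a, sq_nonneg ‖w‖,
    mul_le_mul_of_nonneg_right hdz (norm_nonneg z), mul_le_mul_of_nonneg_left hz1 (abs_nonneg a)]

/-- Near the origin by compactness, far away because `‖w - z‖²` grows like `‖z‖²`. -/
lemma exists_pos_add_mul_sq_le_of_isClosed {K : Set ℂ} (hK : IsClosed K) {w : ℂ} {a b : ℝ}
    (hb : b < 1) (hsep : ∀ z ∈ K, a + b * ‖z‖ ^ 2 < ‖w - z‖ ^ 2) :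
    ∃ ε > 0, b + ε < 1 ∧ ∀ z ∈ K, (a + ε) + (b + ε) * ‖z‖ ^ 2 ≤ ‖w - z‖ ^ 2 := by
  set c := (1 - b) / 2 with hc_def
  have hc : 0 < c := by linarith
  obtain ⟨T, hT⟩ := exists_forall_le_norm_add_mul_sq_le w (a + c) (β := b + c) (by linarith)
  obtain ⟨δ, hδ, hδK⟩ := (isCompact_closedBall (0 : ℂ) T).inter_left hK |>.exists_forall_le'
    (f := fun z => (‖w - z‖ ^ 2 - a - b * ‖z‖ ^ 2) / (1 + ‖z‖ ^ 2)) (a := 0)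
    (ContinuousOn.div (by fun_prop) (by fun_prop) fun z _ => by positivity)
    (fun z hz => div_pos (by linarith [hsep z hz.1]) (by positivity))
  refine ⟨min δ c, lt_min hδ hc, by linarith [min_le_right δ c], fun z hz => ?_⟩
  rcases le_or_gt ‖z‖ T with hzT | hzT
  · have h := hδK z ⟨hz, by simpa using hzT⟩
    rw [le_div_iff₀ (by positivity)] at h
    nlinarith [min_le_left δ c, sq_nonneg ‖z‖]
  · nlinarith [hT z hzT.le, min_le_right δ c, sq_nonneg ‖z‖]

section BlockOperator

variable {H K : Type*} [NormedAddCommGroup H] [InnerProductSpace ℂ H]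
  [NormedAddCommGroup K] [InnerProductSpace ℂ K]

/-- `κ = √(1 - ε / (2 + 2 lam²))`, since `‖(S - lam) g‖² ≤ (2 + 2 lam²) (‖g‖² + ‖S g‖²)`. -/
lemma exists_lt_one_norm_le_mul_norm_sub_smul {S : H →ₗ.[ℂ] H} {M : H →ₗ.[ℂ] K}
    (hdm : S.domain ≤ M.domain) {a b ε lam : ℝ} (hε : 0 < ε)
    (hM : ∀ g : S.domain, ‖M ⟨g, hdm g.2⟩‖ ^ 2 ≤ a * ‖(g : H)‖ ^ 2 + b * ‖S g‖ ^ 2)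
    (hS : ∀ g : S.domain,
      (a + ε) * ‖(g : H)‖ ^ 2 + (b + ε) * ‖S g‖ ^ 2 ≤ ‖S g - (lam : ℂ) • (g : H)‖ ^ 2) :
    ∃ κ, 0 ≤ κ ∧ κ < 1 ∧
      ∀ g : S.domain, ‖M ⟨g, hdm g.2⟩‖ ≤ κ * ‖S g - (lam : ℂ) • (g : H)‖ := by
  set C := 2 + 2 * lam ^ 2
  have hC : 0 < C := by positivity
  refine ⟨√(1 - ε / C), Real.sqrt_nonneg _,
    (Real.sqrt_lt' one_pos).mpr (by linarith [div_pos hε hC]), fun g => ?_⟩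
  have hupper : ‖S g - (lam : ℂ) • (g : H)‖ ^ 2 ≤ C * (‖(g : H)‖ ^ 2 + ‖S g‖ ^ 2) := by
    have h := norm_sub_le (S g) ((lam : ℂ) • (g : H))
    rw [norm_smul, Complex.norm_real, Real.norm_eq_abs] at h
    nlinarith [sq_nonneg (‖S g‖ - |lam| * ‖(g : H)‖), sq_abs lam,
      norm_nonneg (S g - (lam : ℂ) • (g : H))]
  have hsq : ‖M ⟨g, hdm g.2⟩‖ ^ 2 ≤ (1 - ε / C) * ‖S g - (lam : ℂ) • (g : H)‖ ^ 2 := by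
    have : ε / C * ‖S g - (lam : ℂ) • (g : H)‖ ^ 2 ≤ ε * (‖(g : H)‖ ^ 2 + ‖S g‖ ^ 2) := by
      rw [div_mul_eq_mul_div, div_le_iff₀' hC]; nlinarith
    nlinarith [hM g, hS g]
  calc ‖M ⟨g, hdm g.2⟩‖ = √(‖M ⟨g, hdm g.2⟩‖ ^ 2) := (Real.sqrt_sq (norm_nonneg _)).symm
    _ ≤ √((1 - ε / C) * ‖S g - (lam : ℂ) • (g : H)‖ ^ 2) := Real.sqrt_le_sqrt hsq
    _ = _ := by rw [Real.sqrt_mul' _ (by positivity), Real.sqrt_sq (norm_nonneg _)]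

variable [CompleteSpace H]

/-- `R M*` is the restriction of the adjoint of the bounded operator `M R`. -/
lemma ResolventAt.norm_apply_adjoint_apply_le {S : H →ₗ.[ℂ] H}
    (hS : S.IsFormalAdjoint S) {M : H →ₗ.[ℂ] K} (hM : Dense (M.domain : Set H))
    (hdm : S.domain ≤ M.domain) {lam κ : ℝ} (hκ : 0 ≤ κ)
    (hMκ : ∀ g : S.domain, ‖M ⟨g, hdm g.2⟩‖ ≤ κ * ‖S g - (lam : ℂ) • (g : H)‖)
    {R : H →L[ℂ] H} (hR : ResolventAt S lam R) (p : M.adjoint.domain) :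
    ‖R (M.adjoint p)‖ ≤ κ * ‖(p : K)‖ := by
  set x := R (M.adjoint p)
  obtain ⟨hmem, hRx⟩ := hR.1 x
  have h : ‖x‖ ^ 2 ≤ κ * ‖(p : K)‖ * ‖x‖ := by
    calc ‖x‖ ^ 2 = RCLike.re ⟪R (M.adjoint p), x⟫_ℂ := (inner_self_eq_norm_sq x).symm
      _ = RCLike.re ⟪(p : K), M ⟨R x, hdm hmem⟩⟫_ℂ := by
          have hRsymm : ∀ u v : H, ⟪R u, v⟫_ℂ = ⟪u, R v⟫_ℂ := (hR.isSelfAdjoint hS).isSymmetric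
          rw [hRsymm]
          exact congrArg _ (LinearPMap.adjoint_isFormalAdjoint hM p ⟨R x, hdm hmem⟩)
      _ ≤ ‖(p : K)‖ * (κ * ‖x‖) := by
          refine (re_inner_le_norm _ _).trans (mul_le_mul_of_nonneg_left ?_ (norm_nonneg _))
          exact (hMκ ⟨R x, hmem⟩).trans_eq (congrArg (fun v => κ * ‖v‖) hRx)
      _ = κ * ‖(p : K)‖ * ‖x‖ := by ring
  rcases (norm_nonneg x).eq_or_lt with hx | hx
  · rw [← hx]; positivity
  · nlinarith

/-- The second row `-M* x + (S - lam) y = e` of a block system, solved for `y`. -/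
lemma ResolventAt.norm_le_of_norm_apply_adjoint_apply_le {S : H →ₗ.[ℂ] H} {M : H →ₗ.[ℂ] K}
    {lam : ℂ} {R : H →L[ℂ] H} (hR : ResolventAt S lam R) {κ : ℝ}
    (hRM : ∀ p : M.adjoint.domain, ‖R (M.adjoint p)‖ ≤ κ * ‖(p : K)‖)
    (x : M.adjoint.domain) (y : S.domain) :
    ‖(y : H)‖ ≤ κ * ‖(x : K)‖ + ‖R‖ * ‖S y - M.adjoint x - lam • (y : H)‖ := by
  have hy : (y : H) = R (M.adjoint x) + R (S y - M.adjoint x - lam • (y : H)) := by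
    rw [← map_add, show M.adjoint x + (S y - M.adjoint x - lam • (y : H)) = S y - lam • (y : H) by
      abel, hR.2 y]
  calc ‖(y : H)‖ ≤ ‖R (M.adjoint x)‖ + ‖R (S y - M.adjoint x - lam • (y : H))‖ :=
        (congrArg norm hy).trans_le (norm_add_le _ _)
    _ ≤ _ := add_le_add (hRM x) (R.le_opNorm _)

end BlockOperator

lemma liminf_sq_sub_sq_pos {ι : Type*} {l : Filter ι} [l.NeBot] {x y e : ι → ℝ} {κ : ℝ}
    (hκ0 : 0 ≤ κ) (hκ1 : κ < 1) (hx : ∀ i, 0 ≤ x i) (hy : ∀ i, 0 ≤ y i)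
    (hxy : ∀ i, x i ^ 2 + y i ^ 2 = 1) (hyx : ∀ i, y i ≤ κ * x i + e i)
    (he : Tendsto e l (𝓝 0)) :
    0 < liminf (fun i => x i ^ 2 - y i ^ 2) l := by
  have hbdd : IsCoboundedUnder (· ≥ ·) l (fun i => x i ^ 2 - y i ^ 2) :=
    isBoundedUnder_of ⟨1, fun i => by nlinarith [hxy i, sq_nonneg (y i)]⟩
      |>.isCoboundedUnder_ge
  refine (by linarith : 0 < (1 - κ) / 4).trans_le (le_liminf_of_le hbdd ?_)
  filter_upwards [he.eventually (ge_mem_nhds (by linarith : (0 : ℝ) < (1 - κ) / 8))] with i hi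
  -- `x + y ≥ x² + y² = 1` forces `x ≥ (1 - e) / 2`, and then `x - y ≥ (1 - κ) x - e` is positive.
  have hsum : 1 ≤ x i + y i := by
    nlinarith [hxy i, hx i, hy i, sq_nonneg (x i), sq_nonneg (y i)]
  have hx2 : 1 ≤ 2 * x i + e i := by nlinarith [hyx i, hx i]
  have hdiff : (1 - κ) / 4 ≤ x i - y i := by
    nlinarith [hyx i, mul_nonneg (sub_nonneg.mpr hκ1.le) (sub_nonneg.mpr hx2),
      mul_le_mul_of_nonneg_right hi (by linarith : (0 : ℝ) ≤ 3 - κ)]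
  nlinarith [mul_nonneg (by linarith : 0 ≤ x i - y i) (sub_nonneg.mpr hsum)]

variable {Hp Hm : Type*}
  [NormedAddCommGroup Hp] [InnerProductSpace ℂ Hp] [CompleteSpace Hp]
  [NormedAddCommGroup Hm] [InnerProductSpace ℂ Hm] [CompleteSpace Hm]

theorem stmt5_general
    (Sp : Hp →ₗ.[ℂ] Hp) (Sm : Hm →ₗ.[ℂ] Hm)
    (hSm : IsSelfAdjoint Sm)
    (M : Hm →ₗ.[ℂ] Hp) (hMdense : Dense (M.domain : Set Hm))
    (hdm : Sm.domain ≤ M.domain) (hdp : Sp.domain ≤ M.adjoint.domain)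
    (am bm : ℝ)
    (hbm1 : bm < 1)
    (hMbound : ∀ f : Sm.domain,
      ‖M ⟨(f : Hm), hdm f.2⟩‖ ^ 2 ≤ am * ‖(f : Hm)‖ ^ 2 + bm * ‖Sm f‖ ^ 2)
    (S : WithLp 2 (Hp × Hm) →ₗ.[ℂ] WithLp 2 (Hp × Hm))
    (hSdom : ∀ p : WithLp 2 (Hp × Hm),
      p ∈ S.domain ↔ p.ofLp.1 ∈ Sp.domain ∧ p.ofLp.2 ∈ Sm.domain)
    (hSval : ∀ (p : S.domain) (h1 : (p : WithLp 2 (Hp × Hm)).ofLp.1 ∈ Sp.domain)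
        (h2 : (p : WithLp 2 (Hp × Hm)).ofLp.2 ∈ Sm.domain),
      S p = (WithLp.equiv 2 (Hp × Hm)).symm
        (Sp ⟨(p : WithLp 2 (Hp × Hm)).ofLp.1, h1⟩ + M ⟨(p : WithLp 2 (Hp × Hm)).ofLp.2, hdm h2⟩,
         Sm ⟨(p : WithLp 2 (Hp × Hm)).ofLp.2, h2⟩
           - M.adjoint ⟨(p : WithLp 2 (Hp × Hm)).ofLp.1, hdp h1⟩))
    (lam : ℝ)
    (hsep : ∀ t ∈ Spec Sm, Real.sqrt (am + bm * ‖t‖ ^ 2) < ‖(lam : ℂ) - t‖)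
    (fn : ℕ → S.domain) (hnorm : ∀ n, ‖(fn n : WithLp 2 (Hp × Hm))‖ = 1)
    (hconv : Tendsto
      (fun n => ‖S (fn n) - (lam : ℂ) • ((fn n : WithLp 2 (Hp × Hm)))‖) atTop (𝓝 0)) :
    0 < liminf (fun n =>
      ‖((fn n : WithLp 2 (Hp × Hm))).ofLp.1‖ ^ 2 - ‖((fn n : WithLp 2 (Hp × Hm))).ofLp.2‖ ^ 2) atTop := by
  have hSm' := hSm.isFormalAdjoint_self
  have hgap (t : ℂ) (ht : t ∈ Spec Sm) : am + bm * ‖t‖ ^ 2 < ‖(lam : ℂ) - t‖ ^ 2 :=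
    (Real.sqrt_lt' ((Real.sqrt_nonneg _).trans_lt (hsep t ht))).mp (hsep t ht)
  obtain ⟨ε, hε, hbε, hεspec⟩ := exists_pos_add_mul_sq_le_of_isClosed (isClosed_spec Sm) hbm1 hgap
  obtain ⟨κ, hκ0, hκ1, hMκ⟩ := exists_lt_one_norm_le_mul_norm_sub_smul hdm hε hMbound
    (add_mul_norm_sq_le_norm_sub_smul_sq_of_spec hSm' hbε hεspec)
  obtain ⟨R, hR⟩ : InResolventSet Sm lam := by
    by_contra h
    simpa using (Real.sqrt_nonneg _).trans_lt (hsep _ h)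
  refine liminf_sq_sub_sq_pos hκ0 hκ1 (fun _ => norm_nonneg _) (fun _ => norm_nonneg _)
    (fun n => ?_) (fun n => ?_) (by simpa using hconv.const_mul ‖R‖)
  · exact (WithLp.prod_norm_sq_eq_of_L2 (fn n : WithLp 2 (Hp × Hm))).symm.trans
      (by rw [hnorm, one_pow])
  · obtain ⟨h1, h2⟩ := (hSdom _).mp (fn n).2
    refine (hR.norm_le_of_norm_apply_adjoint_apply_le
      (hR.norm_apply_adjoint_apply_le hSm' hMdense hdm hκ0 hMκ) ⟨_, hdp h1⟩ ⟨_, h2⟩).trans ?_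
    gcongr
    refine le_of_eq_of_le ?_
      (WithLp.norm_snd_le (x := S (fn n) - (lam : ℂ) • (fn n : WithLp 2 (Hp × Hm))))
    rw [hSval (fn n) h1 h2]
    simp

/-- **Theorem 4.3 (i).** If `lam` is real with `|lam - t| > √(a₋ + b₋ t²)` for every
`t ∈ σ(S₋)`, then every normalized approximate eigensequence `fₙ = (fₙ⁺, fₙ⁻)` of `S` at
`lam` satisfies `liminf (‖fₙ⁺‖² - ‖fₙ⁻‖²) > 0` (spectral points of positive type). -/
theorem stmt5
    (Sp : Hp →ₗ.[ℂ] Hp) (Sm : Hm →ₗ.[ℂ] Hm)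
    (hSp : IsSelfAdjoint Sp) (hSm : IsSelfAdjoint Sm)
    (M : Hm →ₗ.[ℂ] Hp) (hMdense : Dense (M.domain : Set Hm))
    (hdm : Sm.domain ≤ M.domain) (hdp : Sp.domain ≤ M.adjoint.domain)
    (am ap bm bp : ℝ) (ham : 0 ≤ am) (hap : 0 ≤ ap)
    (hbm0 : 0 ≤ bm) (hbm1 : bm < 1) (hbp0 : 0 ≤ bp) (hbp1 : bp < 1)
    (hMbound : ∀ f : Sm.domain,
      ‖M ⟨(f : Hm), hdm f.2⟩‖ ^ 2 ≤ am * ‖(f : Hm)‖ ^ 2 + bm * ‖Sm f‖ ^ 2)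
    (hMadjBound : ∀ f : Sp.domain,
      ‖M.adjoint ⟨(f : Hp), hdp f.2⟩‖ ^ 2 ≤ ap * ‖(f : Hp)‖ ^ 2 + bp * ‖Sp f‖ ^ 2)
    (S : WithLp 2 (Hp × Hm) →ₗ.[ℂ] WithLp 2 (Hp × Hm))
    (hSdom : ∀ p : WithLp 2 (Hp × Hm),
      p ∈ S.domain ↔ p.ofLp.1 ∈ Sp.domain ∧ p.ofLp.2 ∈ Sm.domain)
    (hSval : ∀ (p : S.domain) (h1 : (p : WithLp 2 (Hp × Hm)).ofLp.1 ∈ Sp.domain)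
        (h2 : (p : WithLp 2 (Hp × Hm)).ofLp.2 ∈ Sm.domain),
      S p = (WithLp.equiv 2 (Hp × Hm)).symm
        (Sp ⟨(p : WithLp 2 (Hp × Hm)).ofLp.1, h1⟩ + M ⟨(p : WithLp 2 (Hp × Hm)).ofLp.2, hdm h2⟩,
         Sm ⟨(p : WithLp 2 (Hp × Hm)).ofLp.2, h2⟩
           - M.adjoint ⟨(p : WithLp 2 (Hp × Hm)).ofLp.1, hdp h1⟩))
    (lam : ℝ)
    (hsep : ∀ t ∈ Spec Sm, Real.sqrt (am + bm * ‖t‖ ^ 2) < ‖(lam : ℂ) - t‖)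
    (fn : ℕ → S.domain) (hnorm : ∀ n, ‖(fn n : WithLp 2 (Hp × Hm))‖ = 1)
    (hconv : Tendsto
      (fun n => ‖S (fn n) - (lam : ℂ) • ((fn n : WithLp 2 (Hp × Hm)))‖) atTop (𝓝 0)) :
    0 < liminf (fun n =>
      ‖((fn n : WithLp 2 (Hp × Hm))).ofLp.1‖ ^ 2 - ‖((fn n : WithLp 2 (Hp × Hm))).ofLp.2‖ ^ 2) atTop :=
  stmt5_general Sp Sm hSm M hMdense hdm hdp am bm hbm1 hMbound S hSdom hSval lam hsep fn hnorm hconv
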